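/- For every α > 1, ∫_0^{√α} ∫_0^ξ (1/(ξη)) e^{η² − ξ²} (∫_0^η e^{-ζ²} dζ)² (∫_ξ^∞ e^{-ζ²} dζ)² dη dξ is finite, and as α → ∞ it converges to the finite limit ∫_0^∞ ∫_0^ξ (1/(ξη)) e^{η² − ξ²} (∫_0^η e^{-ζ²} dζ)² (∫_ξ^∞ e^{-ζ²} dζ)² dη dξ. -/

import Mathlib

open Real Filter MeasureTheory Set

/-- The integrand of the limiting rescaled variance of the fixation time of a
recessive sweep. -/
noncomputable def recessiveVarIntegrand (p : ℝ × ℝ) : ℝ :=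
  (1 / (p.1 * p.2)) * Real.exp (p.2 ^ 2 - p.1 ^ 2) *
    (∫ ζ in (0 : ℝ)..p.2, Real.exp (-ζ ^ 2)) ^ 2 *
    (∫ ζ in Ioi p.1, Real.exp (-ζ ^ 2)) ^ 2

/-!
Write `A η = ∫₀^η e^{-ζ²}` and `B ξ = ∫_ξ^∞ e^{-ζ²}`. Since `A η ≤ η` and, by
`ζ² ≥ ξ² + (ζ - ξ)²` for `ζ ≥ ξ ≥ 0`, `B ξ ≤ √π e^{-ξ²}`, on `0 < η ≤ ξ` the integrand is at most
`π (η/ξ) e^{η² - 3ξ²} ≤ π e^{-ξ²} e^{-η²}`, an integrable Gaussian. This removes both the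
singularity at the origin and the growth of `e^{η²}`; the truncated regions increase to the full
one, so the convergence is monotone convergence of set integrals.
-/

lemma integrable_exp_neg_sq : Integrable fun x : ℝ => exp (-x ^ 2) := by
  simpa using integrable_exp_neg_mul_sq one_pos

lemma integral_exp_neg_sq : ∫ x : ℝ, exp (-x ^ 2) = √π := by
  simpa using integral_gaussian 1

lemma integral_Ioi_exp_neg_sq_le {ξ : ℝ} (hξ : 0 ≤ ξ) :
    ∫ ζ in Ioi ξ, exp (-ζ ^ 2) ≤ √π * exp (-ξ ^ 2) := by
  have hint : Integrable fun ζ : ℝ => exp (-ξ ^ 2) * exp (-(ζ - ξ) ^ 2) :=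
    (integrable_exp_neg_sq.comp_sub_right ξ).const_mul _
  calc ∫ ζ in Ioi ξ, exp (-ζ ^ 2)
      ≤ ∫ ζ in Ioi ξ, exp (-ξ ^ 2) * exp (-(ζ - ξ) ^ 2) := by
        refine setIntegral_mono_on integrable_exp_neg_sq.integrableOn hint.integrableOn
          measurableSet_Ioi fun ζ hζ => ?_
        rw [← exp_add]
        exact exp_le_exp.2 (by nlinarith [mem_Ioi.1 hζ])
    _ ≤ ∫ ζ, exp (-ξ ^ 2) * exp (-(ζ - ξ) ^ 2) :=
        setIntegral_le_integral hint (ae_of_all _ fun _ => by positivity)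
    _ = √π * exp (-ξ ^ 2) := by
        rw [integral_const_mul, integral_sub_right_eq_self (fun ζ => exp (-ζ ^ 2)),
          integral_exp_neg_sq, mul_comm]

lemma intervalIntegral_exp_neg_sq_le {η : ℝ} (hη : 0 ≤ η) :
    ∫ ζ in 0..η, exp (-ζ ^ 2) ≤ η := by
  have h := intervalIntegral.norm_integral_le_of_norm_le_const (a := 0) (b := η) (C := 1)
    (f := fun ζ => exp (-ζ ^ 2)) fun ζ _ => by
      rw [norm_of_nonneg (exp_pos _).le]
      exact exp_le_one_iff.2 (by nlinarith)
  rw [sub_zero, abs_of_nonneg hη, one_mul] at h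
  exact (le_abs_self _).trans h

lemma antitone_integral_Ioi_exp_neg_sq : Antitone fun ξ : ℝ => ∫ ζ in Ioi ξ, exp (-ζ ^ 2) :=
  fun _ _ h => setIntegral_mono_set integrable_exp_neg_sq.integrableOn
    (ae_of_all _ fun _ => (exp_pos _).le) (Ioi_subset_Ioi h).eventuallyLE

lemma measurable_recessiveVarIntegrand : Measurable recessiveVarIntegrand := by
  have hA : Measurable fun η : ℝ => ∫ ζ in 0..η, exp (-ζ ^ 2) :=
    (intervalIntegral.continuous_primitive
      (fun _ _ => (by fun_prop : Continuous fun ζ : ℝ => exp (-ζ ^ 2)).intervalIntegrable _ _)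
        0).measurable
  have hB : Measurable fun p : ℝ × ℝ => ∫ ζ in Ioi p.1, exp (-ζ ^ 2) :=
    antitone_integral_Ioi_exp_neg_sq.measurable.comp measurable_fst
  unfold recessiveVarIntegrand
  fun_prop

lemma recessiveVarIntegrand_nonneg {p : ℝ × ℝ} (hη : 0 < p.2) (hηξ : p.2 ≤ p.1) :
    0 ≤ recessiveVarIntegrand p := by
  have hξ : 0 < p.1 := hη.trans_le hηξ
  unfold recessiveVarIntegrand
  positivity

lemma recessiveVarIntegrand_le {p : ℝ × ℝ} (hη : 0 < p.2) (hηξ : p.2 ≤ p.1) :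
    recessiveVarIntegrand p ≤ π * (exp (-p.1 ^ 2) * exp (-p.2 ^ 2)) := by
  obtain ⟨ξ, η⟩ := p
  dsimp only at hη hηξ ⊢
  have hξ : 0 < ξ := hη.trans_le hηξ
  have hA : 0 ≤ ∫ ζ in 0..η, exp (-ζ ^ 2) :=
    intervalIntegral.integral_nonneg hη.le fun _ _ => (exp_pos _).le
  calc recessiveVarIntegrand (ξ, η)
      ≤ 1 / (ξ * η) * exp (η ^ 2 - ξ ^ 2) * η ^ 2 * (√π * exp (-ξ ^ 2)) ^ 2 := by
        unfold recessiveVarIntegrand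
        gcongr
        · exact intervalIntegral_exp_neg_sq_le hη.le
        · exact integral_Ioi_exp_neg_sq_le hξ.le
    _ = π * (η / ξ) * exp (η ^ 2 - 3 * ξ ^ 2) := by
        have : exp (η ^ 2 - 3 * ξ ^ 2) = exp (η ^ 2 - ξ ^ 2) * exp (-ξ ^ 2) ^ 2 := by
          rw [sq (exp _), ← exp_add, ← exp_add]; ring_nf
        rw [this, mul_pow, sq_sqrt pi_pos.le]
        field_simp
    _ ≤ π * 1 * exp (-ξ ^ 2 + -η ^ 2) := by
        gcongr
        · exact (div_le_one hξ).2 hηξ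
        · nlinarith
    _ = π * (exp (-ξ ^ 2) * exp (-η ^ 2)) := by rw [mul_one, exp_add]

lemma integrableOn_recessiveVarIntegrand :
    IntegrableOn recessiveVarIntegrand {p : ℝ × ℝ | 0 < p.2 ∧ p.2 ≤ p.1} := by
  have hS : MeasurableSet {p : ℝ × ℝ | 0 < p.2 ∧ p.2 ≤ p.1} := by measurability
  have hg : Integrable fun p : ℝ × ℝ => π * (exp (-p.1 ^ 2) * exp (-p.2 ^ 2)) := by
    rw [Measure.volume_eq_prod]
    exact (integrable_exp_neg_sq.mul_prod integrable_exp_neg_sq).const_mul π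
  refine hg.integrableOn.mono' measurable_recessiveVarIntegrand.aestronglyMeasurable.restrict
    ((ae_restrict_iff' hS).2 (ae_of_all _ fun p ⟨hη, hηξ⟩ => ?_))
  rw [norm_of_nonneg (recessiveVarIntegrand_nonneg hη hηξ)]
  exact recessiveVarIntegrand_le hη hηξ

lemma monotone_setOf_le_sqrt :
    Monotone fun α : ℝ => {p : ℝ × ℝ | 0 < p.2 ∧ p.2 ≤ p.1 ∧ p.1 ≤ √α} :=
  fun _ _ hαβ _ ⟨hη, hηξ, hξ⟩ => ⟨hη, hηξ, hξ.trans (sqrt_le_sqrt hαβ)⟩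

lemma iUnion_setOf_le_sqrt :
    ⋃ α : ℝ, {p : ℝ × ℝ | 0 < p.2 ∧ p.2 ≤ p.1 ∧ p.1 ≤ √α} =
      {p : ℝ × ℝ | 0 < p.2 ∧ p.2 ≤ p.1} := by
  ext p
  simp only [mem_iUnion, mem_ofPred_eq]
  exact ⟨fun ⟨_, hη, hηξ, _⟩ => ⟨hη, hηξ⟩, fun ⟨hη, hηξ⟩ =>
    ⟨p.1 ^ 2, hη, hηξ, (le_sqrt (hη.le.trans hηξ) (sq_nonneg _)).2 le_rfl⟩⟩

/-- For every `α > 1` the truncated double integral (over `0 < η ≤ ξ ≤ √α`) is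
finite, and as `α → ∞` it converges to the finite full double integral over
`0 < η ≤ ξ < ∞`. -/
theorem recessive_variance_integral_finite_and_tendsto :
    (∀ α : ℝ, 1 < α →
      IntegrableOn recessiveVarIntegrand
        {p : ℝ × ℝ | 0 < p.2 ∧ p.2 ≤ p.1 ∧ p.1 ≤ Real.sqrt α})
    ∧ IntegrableOn recessiveVarIntegrand {p : ℝ × ℝ | 0 < p.2 ∧ p.2 ≤ p.1}
    ∧ Tendsto
        (fun α : ℝ =>
          ∫ p in {p : ℝ × ℝ | 0 < p.2 ∧ p.2 ≤ p.1 ∧ p.1 ≤ Real.sqrt α},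
            recessiveVarIntegrand p)
        atTop
        (nhds (∫ p in {p : ℝ × ℝ | 0 < p.2 ∧ p.2 ≤ p.1},
          recessiveVarIntegrand p)) := by
  have hint := integrableOn_recessiveVarIntegrand
  refine ⟨fun _ _ => hint.mono_set fun p hp => ⟨hp.1, hp.2.1⟩, hint, ?_⟩
  have h := tendsto_setIntegral_of_monotone (fun _ => by measurability) monotone_setOf_le_sqrt
    (iUnion_setOf_le_sqrt ▸ hint)
  rwa [iUnion_setOf_le_sqrt] at h
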